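/- Let $V$ be a real vector space, let $m \ge 1$, and for each index $\gamma \in \{0, \dots, m-1\}$ let $\omega_\gamma : V \to \mathbb{R}$ be a linear functional, $T_\gamma \in \mathbb{R}$, and $\varepsilon_\gamma \in \{-1, +1\}$. Let $\varepsilon \in \{-1,+1\}$ and $r \in \mathbb{R}$, assume $\sum_\gamma \varepsilon_\gamma T_\gamma^2 = \varepsilon$, set $\delta = \sum_\gamma T_\gamma \omega_\gamma$, and define $X_{\alpha\beta} = r\,(T_\beta\, \omega_\alpha - \varepsilon_\alpha \varepsilon_\beta T_\alpha\, \omega_\beta)$ for all indices $\alpha, \beta$. Then for all indices $\alpha, \beta$ and all $u, v \in V$: $\sum_\gamma \big( X_{\alpha\gamma}(u) X_{\gamma\beta}(v) - X_{\alpha\gamma}(v) X_{\gamma\beta}(u) \big) = r\big( X_{\alpha\beta}(u)\,\delta(v) - X_{\alpha\beta}(v)\,\delta(u) \big) - r^2\, \varepsilon\, \varepsilon_\beta \big( \omega_\alpha(u)\,\omega_\beta(v) - \omega_\alpha(v)\,\omega_\beta(u) \big).$ -/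

import Mathlib

open Finset

section WedgeIdentity

variable {ι R : Type*} [CommRing R]

/-- `X_{αβ}(u) = r (T_β ω_α(u) - ε_α ε_β T_α ω_β(u))`, with `a γ = ω_γ(u)`. -/
def connectionForm (r : R) (T εs a : ι → R) (α β : ι) : R :=
  r * (T β * a α - εs α * εs β * (T α * a β))

variable (r : R) (T εs : ι → R)

/-- The cross terms cancel because `ε_γ² = 1`. -/
lemma connectionForm_wedge_term (hεs : ∀ γ, εs γ * εs γ = 1) (a b : ι → R) (α β γ : ι) :
    connectionForm r T εs a α γ * connectionForm r T εs b γ β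
        - connectionForm r T εs b α γ * connectionForm r T εs a γ β
      = r * connectionForm r T εs a α β * (T γ * b γ)
        - r * connectionForm r T εs b α β * (T γ * a γ)
        - r ^ 2 * εs β * (a α * b β - b α * a β) * (εs γ * T γ ^ 2) := by
  unfold connectionForm
  linear_combination (r ^ 2 * εs α * εs β * T α * T γ * (a γ * b β - b γ * a β)) * hεs γ

lemma sum_connectionForm_wedge [Fintype ι] (hεs : ∀ γ, εs γ * εs γ = 1) {ε : R}
    (hsum : ∑ γ, εs γ * T γ ^ 2 = ε) (a b : ι → R) (α β : ι) :
    ∑ γ, (connectionForm r T εs a α γ * connectionForm r T εs b γ β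
        - connectionForm r T εs b α γ * connectionForm r T εs a γ β)
      = r * (connectionForm r T εs a α β * ∑ γ, T γ * b γ
          - connectionForm r T εs b α β * ∑ γ, T γ * a γ)
        - r ^ 2 * ε * εs β * (a α * b β - b α * a β) := by
  simp only [connectionForm_wedge_term r T εs hεs, sum_sub_distrib, ← mul_sum, hsum]
  ring

end WedgeIdentity

theorem stmt_8_general (V : Type*) [AddCommGroup V] [Module ℝ V]
    (m : ℕ)
    (ω : Fin m → (V →ₗ[ℝ] ℝ)) (T : Fin m → ℝ) (εs : Fin m → ℝ)
    (hεs : ∀ γ, εs γ = 1 ∨ εs γ = -1)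
    (ε : ℝ) (r : ℝ)
    (hsum : ∑ γ : Fin m, εs γ * (T γ) ^ 2 = ε)
    (δ : V → ℝ) (hδ : ∀ u : V, δ u = ∑ γ : Fin m, T γ * ω γ u)
    (X : Fin m → Fin m → V → ℝ)
    (hX : ∀ α β : Fin m, ∀ u : V,
      X α β u = r * (T β * ω α u - εs α * εs β * (T α * ω β u))) :
    ∀ α β : Fin m, ∀ u v : V,
      ∑ γ : Fin m, (X α γ u * X γ β v - X α γ v * X γ β u)
        = r * (X α β u * δ v - X α β v * δ u)
          - r ^ 2 * ε * εs β * (ω α u * ω β v - ω α v * ω β u) := by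
  intro α β u v
  have hεs_sq : ∀ γ, εs γ * εs γ = 1 := fun γ => by
    rcases hεs γ with h | h <;> simp [h]
  have hX' : ∀ α β u, X α β u = connectionForm r T εs (fun γ => ω γ u) α β := hX
  simp only [hX', hδ]
  exact sum_connectionForm_wedge r T εs hεs_sq hsum _ _ α β

/-- Pointwise form of the wedge identity
`(X ∧ X)_{αβ} = r X_{αβ} ∧ δ - r² ε ε_β ω_α ∧ ω_β` for
`X_{αβ} = r (T_β ω_α - ε_α ε_β T_α ω_β)`, assuming `∑ γ, ε_γ T_γ² = ε`. -/
theorem stmt_8 (V : Type*) [AddCommGroup V] [Module ℝ V]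
    (m : ℕ) (hm : 1 ≤ m)
    (ω : Fin m → (V →ₗ[ℝ] ℝ)) (T : Fin m → ℝ) (εs : Fin m → ℝ)
    (hεs : ∀ γ, εs γ = 1 ∨ εs γ = -1)
    (ε : ℝ) (hε : ε = 1 ∨ ε = -1) (r : ℝ)
    (hsum : ∑ γ : Fin m, εs γ * (T γ) ^ 2 = ε)
    (δ : V → ℝ) (hδ : ∀ u : V, δ u = ∑ γ : Fin m, T γ * ω γ u)
    (X : Fin m → Fin m → V → ℝ)
    (hX : ∀ α β : Fin m, ∀ u : V,
      X α β u = r * (T β * ω α u - εs α * εs β * (T α * ω β u))) :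
    ∀ α β : Fin m, ∀ u v : V,
      ∑ γ : Fin m, (X α γ u * X γ β v - X α γ v * X γ β u)
        = r * (X α β u * δ v - X α β v * δ u)
          - r ^ 2 * ε * εs β * (ω α u * ω β v - ω α v * ω β u) :=
  stmt_8_general V m ω T εs hεs ε r hsum δ hδ X hX
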